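/- arXiv:math/0410163 — 2 statements merged into one kernel-verified Lean document; each statement's English description precedes it below -/
import Mathlib

section
/- Let a : T^P → ℝ^{P×P} be measurable with ⟨ξ, a(x)ξ⟩ ≥ λ|ξ|² for all x and all ξ ∈ ℝ^P, where λ > 0. Let G : T^P → ℝ^{P×P} be integrable with ∫_{T^P} G(x) dx = 0, and let p : T^P → ℝ be measurable with p(x) ≥ 1/C for some C > 0, and suppose all the relevant integrals exist. Define ᾱ = ∫_{T^P} (I + G(x)) a(x) (I + G(x))ᵀ p(x) dx. Then for all ξ ∈ ℝ^P, ⟨ξ, ᾱ ξ⟩ ≥ (λ/C) |ξ|². -/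
open MeasureTheory Matrix

theorem stmt1 (P : ℕ) (hP : 1 ≤ P) (lam C : ℝ) (hlam : 0 < lam) (hC : 0 < C)
    (a G : (Fin P → AddCircle (1:ℝ)) → Matrix (Fin P) (Fin P) ℝ)
    (p : (Fin P → AddCircle (1:ℝ)) → ℝ)
    (ha_meas : ∀ i j, Measurable fun x => a x i j)
    (hell : ∀ x (ξ : Fin P → ℝ), lam * ∑ i, ξ i ^ 2 ≤ ξ ⬝ᵥ (a x *ᵥ ξ))
    (hG_int : ∀ i j, Integrable fun x => G x i j)
    (hG_zero : ∀ i j, (∫ x, G x i j) = 0)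
    (hp_meas : Measurable p)
    (hp_low : ∀ x, 1 / C ≤ p x)
    (hint : ∀ i j, Integrable fun x => (((1 + G x) * a x * (1 + G x)ᵀ : Matrix (Fin P) (Fin P) ℝ) i j) * p x)
    (hint2 : ∀ ξ : Fin P → ℝ, Integrable fun x => ∑ i, (((1 + G x)ᵀ *ᵥ ξ) i) ^ 2)
    (αbar : Matrix (Fin P) (Fin P) ℝ)
    (hαbar : ∀ i j, αbar i j = ∫ x, (((1 + G x) * a x * (1 + G x)ᵀ : Matrix (Fin P) (Fin P) ℝ) i j) * p x)
    (ξ : Fin P → ℝ) :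
    lam / C * ∑ i, ξ i ^ 2 ≤ ξ ⬝ᵥ (αbar *ᵥ ξ) := by
  classical
  have hprob1 : IsProbabilityMeasure (volume : Measure (AddCircle (1:ℝ))) :=
    ⟨by rw [AddCircle.measure_univ]; norm_num⟩
  have hprob : IsProbabilityMeasure (volume : Measure (Fin P → AddCircle (1:ℝ))) := by
    infer_instance
  -- η x = (1 + G x)ᵀ *ᵥ ξ
  set η : (Fin P → AddCircle (1:ℝ)) → Fin P → ℝ := fun x => (1 + G x)ᵀ *ᵥ ξ with hηdef
  -- pointwise identity: ξᵀ M ξ = η ⬝ a η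
  have hpt : ∀ x, ξ ⬝ᵥ ((((1 + G x) * a x * (1 + G x)ᵀ : Matrix (Fin P) (Fin P) ℝ)) *ᵥ ξ)
      = η x ⬝ᵥ (a x *ᵥ η x) := by
    intro x
    show _ = ((1 + G x)ᵀ *ᵥ ξ) ⬝ᵥ (a x *ᵥ ((1 + G x)ᵀ *ᵥ ξ))
    rw [← Matrix.mulVec_mulVec, ← Matrix.mulVec_mulVec, Matrix.dotProduct_mulVec,
      Matrix.mulVec_transpose]
  -- f x = expanded integrand
  set M : (Fin P → AddCircle (1:ℝ)) → Matrix (Fin P) (Fin P) ℝ :=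
    fun x => (1 + G x) * a x * (1 + G x)ᵀ with hMdef
  set f : (Fin P → AddCircle (1:ℝ)) → ℝ :=
    fun x => ∑ i, ∑ j, (ξ i * ξ j) * (M x i j * p x) with hfdef
  have hf_int : Integrable f := by
    refine integrable_finset_sum _ fun i _ => integrable_finset_sum _ fun j _ => ?_
    exact (hint i j).const_mul _
  have hfeq : ∀ x, (η x ⬝ᵥ (a x *ᵥ η x)) * p x = f x := by
    intro x
    rw [← hpt x]
    simp only [hfdef, dotProduct, mulVec, Finset.sum_mul, Finset.mul_sum]
    exact Finset.sum_congr rfl fun i _ => Finset.sum_congr rfl fun j _ => by ring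
  -- the quadratic form of αbar equals ∫ f
  have hαint : ξ ⬝ᵥ (αbar *ᵥ ξ) = ∫ x, f x := by
    have h1 : ξ ⬝ᵥ (αbar *ᵥ ξ) = ∑ i, ∑ j, (ξ i * ξ j) * αbar i j := by
      simp only [dotProduct, mulVec, Finset.mul_sum]
      exact Finset.sum_congr rfl fun i _ => Finset.sum_congr rfl fun j _ => by ring
    rw [h1, integral_finset_sum _ (fun i _ => integrable_finset_sum _ fun j _ =>
      (hint i j).const_mul _)]
    refine Finset.sum_congr rfl fun i _ => ?_
    rw [integral_finset_sum _ (fun j _ => (hint i j).const_mul _)]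
    refine Finset.sum_congr rfl fun j _ => ?_
    rw [hαbar i j, ← integral_const_mul]
  -- pointwise lower bound
  have hlb : ∀ x, lam / C * (∑ i, (η x i) ^ 2) ≤ f x := by
    intro x
    rw [← hfeq x]
    have h1 : lam * ∑ i, (η x i) ^ 2 ≤ η x ⬝ᵥ (a x *ᵥ η x) := hell x (η x)
    have h0 : (0:ℝ) ≤ ∑ i, (η x i) ^ 2 := Finset.sum_nonneg fun i _ => sq_nonneg _
    have h2 : (0:ℝ) ≤ η x ⬝ᵥ (a x *ᵥ η x) := le_trans (by positivity) h1
    calc lam / C * ∑ i, (η x i) ^ 2 = (lam * ∑ i, (η x i) ^ 2) * (1 / C) := by ring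
      _ ≤ (η x ⬝ᵥ (a x *ᵥ η x)) * (1 / C) := by
          apply mul_le_mul_of_nonneg_right h1; positivity
      _ ≤ (η x ⬝ᵥ (a x *ᵥ η x)) * p x := mul_le_mul_of_nonneg_left (hp_low x) h2
  -- expansion of η
  set g : (Fin P → AddCircle (1:ℝ)) → Fin P → ℝ := fun x i => ∑ j, G x j i * ξ j with hgdef
  have hη_exp : ∀ x i, η x i = ξ i + g x i := by
    intro x i
    have : (1 + G x)ᵀ = 1 + (G x)ᵀ := by simp [Matrix.transpose_add]
    rw [hηdef]
    simp only [this, Matrix.add_mulVec, Matrix.one_mulVec, Pi.add_apply, hgdef]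
    simp [Matrix.mulVec, dotProduct, Matrix.transpose_apply]
  set L : (Fin P → AddCircle (1:ℝ)) → ℝ := fun x => ∑ i, ∑ j, (2 * ξ i * ξ j) * G x j i
    with hLdef
  set Q : (Fin P → AddCircle (1:ℝ)) → ℝ := fun x => ∑ i, (g x i) ^ 2 with hQdef
  have hsum : ∀ x, (∑ i, (η x i) ^ 2) = (∑ i, ξ i ^ 2 + L x) + Q x := by
    intro x
    simp only [hLdef, hQdef]
    rw [← Finset.sum_add_distrib, ← Finset.sum_add_distrib]
    refine Finset.sum_congr rfl fun i _ => ?_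
    have hmid : (∑ j, (2 * ξ i * ξ j) * G x j i) = 2 * ξ i * g x i := by
      rw [hgdef, Finset.mul_sum]
      exact Finset.sum_congr rfl fun j _ => by ring
    rw [hη_exp x i, hmid]
    ring
  have hL_int : Integrable L :=
    integrable_finset_sum _ fun i _ => integrable_finset_sum _ fun j _ =>
      (hG_int j i).const_mul _
  have hL_zero : (∫ x, L x) = 0 := by
    rw [hLdef]
    rw [integral_finset_sum _ (fun i _ => integrable_finset_sum _ fun j _ =>
      (hG_int j i).const_mul _)]
    refine Finset.sum_eq_zero fun i _ => ?_
    rw [integral_finset_sum _ (fun j _ => (hG_int j i).const_mul _)]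
    refine Finset.sum_eq_zero fun j _ => ?_
    rw [integral_const_mul, hG_zero j i, mul_zero]
  have hη2_int : Integrable (fun x => ∑ i, (η x i) ^ 2) := hint2 ξ
  have hQ_int : Integrable Q := by
    have : Q = fun x => (∑ i, (η x i) ^ 2) - ((∑ i, ξ i ^ 2) + L x) := by
      funext x; rw [hsum x]; ring
    rw [this]
    exact hη2_int.sub ((integrable_const _).add hL_int)
  have hcL : Integrable (fun x => (∑ i, ξ i ^ 2) + L x) := (integrable_const _).add hL_int
  have hmain : (∑ i, ξ i ^ 2) ≤ ∫ x, ∑ i, (η x i) ^ 2 := by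
    have h1 : ∫ x, ((∑ i, ξ i ^ 2) + L x) ≤ ∫ x, ∑ i, (η x i) ^ 2 := by
      refine integral_mono hcL hη2_int fun x => ?_
      rw [hsum x]
      have : (0:ℝ) ≤ Q x := Finset.sum_nonneg fun i _ => sq_nonneg _
      linarith
    have h2 : ∫ x, ((∑ i, ξ i ^ 2) + L x) = (∑ i, ξ i ^ 2) := by
      rw [integral_add (integrable_const _) hL_int, integral_const, hL_zero]
      simp [measure_univ]
    linarith
  calc lam / C * ∑ i, ξ i ^ 2 ≤ lam / C * ∫ x, ∑ i, (η x i) ^ 2 := by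
        apply mul_le_mul_of_nonneg_left hmain; positivity
    _ = ∫ x, lam / C * ∑ i, (η x i) ^ 2 := (integral_const_mul _ _).symm
    _ ≤ ∫ x, f x := integral_mono (hη2_int.const_mul _) hf_int hlb
    _ = ξ ⬝ᵥ (αbar *ᵥ ξ) := hαint.symm
end

section
/- Let u : T^P × ℝ^Q × ℝ^{Q×P} → ℝ^P be measurable, bounded by Λ, and K-Lipschitz in (y,z) uniformly in x, and let G : T^P × ℝ^Q → ℝ^{P×P} be bounded by M and K-Lipschitz in y uniformly in x. Suppose p : T^P × ℝ^Q → ℝ satisfies 1/C ≤ p ≤ C, ∫_{T^P} p(x,y) dx = 1 for every y, and y ↦ p(·,y) ∈ L²(T^P) is K-Lipschitz. Define ū(y,z) = ∫_{T^P} u(x, y, z(I + G(x,y))) p(x,y) dx. Then for every R > 0, the function ū is Lipschitz on B̄(0,R) × B̄(0,R) ⊆ ℝ^Q × ℝ^{Q×P}, with a Lipschitz constant depending only on Λ, K, M, C and R. -/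
/-!
Write `p = p(·, y)`, `f = u(·, y, z (I + G(·, y)))` and `p'`, `f'` for the same at `(y', z')`.
Splitting `∫ p' f' - ∫ p f = ∫ (p' - p) f' + ∫ p (f' - f)`, the first term is at most
`Λ ‖p' - p‖₁ ≤ Λ ‖p' - p‖₂` by Cauchy–Schwarz on the probability space `𝕋^P`, and the second
at most `C sup ‖f' - f‖`. Since `z' (I + G') - z (I + G) = (z' - z) (I + G') + z (G' - G)`, the
map `(y, z) ↦ z (I + G(x, y))` is Lipschitz on `‖z‖ ≤ R` uniformly in `x`, hence so is `f`.
-/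

open MeasureTheory Matrix

noncomputable def frobeniusNorm19 {m n : ℕ} (M : Matrix (Fin m) (Fin n) ℝ) : ℝ :=
  Real.sqrt (∑ i, ∑ j, (M i j) ^ 2)

open ProbabilityTheory

instance : IsProbabilityMeasure (volume : Measure UnitAddCircle) := ⟨UnitAddCircle.measure_univ⟩

section Frobenius

attribute [local instance] Matrix.frobeniusNormedAddCommGroup

variable {m n : ℕ}

lemma frobeniusNorm19_eq_norm (A : Matrix (Fin m) (Fin n) ℝ) : frobeniusNorm19 A = ‖A‖ := by
  rw [frobeniusNorm19, Matrix.frobenius_norm_def, Real.sqrt_eq_rpow]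
  simp only [Real.norm_eq_abs, Real.rpow_two, sq_abs]

lemma frobeniusNorm19_nonneg (A : Matrix (Fin m) (Fin n) ℝ) : 0 ≤ frobeniusNorm19 A :=
  Real.sqrt_nonneg _

lemma frobeniusNorm19_mul_one_add_sub_le (z z' : Matrix (Fin m) (Fin n) ℝ)
    (G G' : Matrix (Fin n) (Fin n) ℝ) :
    frobeniusNorm19 (z' * (1 + G') - z * (1 + G)) ≤
      frobeniusNorm19 (z' - z) * (1 + frobeniusNorm19 G') +
        frobeniusNorm19 z * frobeniusNorm19 (G' - G) := by
  simp only [frobeniusNorm19_eq_norm]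
  have hsplit : z' * (1 + G') - z * (1 + G) = (z' - z) + (z' - z) * G' + z * (G' - G) := by
    simp only [Matrix.mul_add, Matrix.mul_one, Matrix.sub_mul, Matrix.mul_sub]; abel
  calc ‖z' * (1 + G') - z * (1 + G)‖
      ≤ ‖z' - z‖ + ‖(z' - z) * G'‖ + ‖z * (G' - G)‖ := by
        rw [hsplit]; exact norm_add₃_le
    _ ≤ ‖z' - z‖ + ‖z' - z‖ * ‖G'‖ + ‖z‖ * ‖G' - G‖ := by
        gcongr <;> exact Matrix.frobenius_norm_mul _ _
    _ = ‖z' - z‖ * (1 + ‖G'‖) + ‖z‖ * ‖G' - G‖ := by ring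

lemma continuous_of_norm_sub_le_frobeniusNorm19 {E : Type*} [SeminormedAddCommGroup E]
    {f : Matrix (Fin m) (Fin n) ℝ → E} {K : ℝ}
    (hf : ∀ z z', ‖f z' - f z‖ ≤ K * frobeniusNorm19 (z' - z)) : Continuous f :=
  (LipschitzWith.of_dist_le' fun z' z => by
    simpa only [dist_eq_norm, frobeniusNorm19_eq_norm] using hf z z').continuous

end Frobenius

lemma norm_sub_le_of_lipschitz_comp_mul_one_add {Y E : Type*} [SeminormedAddCommGroup Y]
    [SeminormedAddCommGroup E] {m n : ℕ} {v : Y → Matrix (Fin m) (Fin n) ℝ → E}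
    {H : Y → Matrix (Fin n) (Fin n) ℝ} {K M R : ℝ}
    (hv : ∀ y y' z z', ‖v y' z' - v y z‖ ≤ K * (‖y' - y‖ + frobeniusNorm19 (z' - z)))
    (hH : ∀ y, frobeniusNorm19 (H y) ≤ M)
    (hH_lip : ∀ y y', frobeniusNorm19 (H y' - H y) ≤ K * ‖y' - y‖)
    {y y' : Y} {z z' : Matrix (Fin m) (Fin n) ℝ} (hz : frobeniusNorm19 z ≤ R) :
    ‖v y' (z' * (1 + H y')) - v y (z * (1 + H y))‖ ≤
      |K| * (1 + M + R * |K|) * (‖y' - y‖ + frobeniusNorm19 (z' - z)) := by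
  have hR : 0 ≤ R := (frobeniusNorm19_nonneg z).trans hz
  have hM : 0 ≤ M := (frobeniusNorm19_nonneg _).trans (hH y')
  have hdy := norm_nonneg (y' - y)
  have hdz := frobeniusNorm19_nonneg (z' - z)
  have hmat : frobeniusNorm19 (z' * (1 + H y') - z * (1 + H y)) ≤
      frobeniusNorm19 (z' - z) * (1 + M) + R * (|K| * ‖y' - y‖) :=
    (frobeniusNorm19_mul_one_add_sub_le z z' (H y) (H y')).trans <|
      add_le_add (mul_le_mul_of_nonneg_left (by linarith [hH y']) hdz)
        (mul_le_mul hz ((hH_lip y y').trans (mul_le_mul_of_nonneg_right (le_abs_self K) hdy))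
          (frobeniusNorm19_nonneg _) hR)
  calc ‖v y' (z' * (1 + H y')) - v y (z * (1 + H y))‖
      ≤ |K| * (‖y' - y‖ + frobeniusNorm19 (z' * (1 + H y') - z * (1 + H y))) :=
        (hv _ _ _ _).trans (mul_le_mul_of_nonneg_right (le_abs_self K)
          (add_nonneg hdy (frobeniusNorm19_nonneg _)))
    _ ≤ |K| * (‖y' - y‖ + (frobeniusNorm19 (z' - z) * (1 + M) + R * (|K| * ‖y' - y‖))) := by
        gcongr
    _ ≤ |K| * (1 + M + R * |K|) * (‖y' - y‖ + frobeniusNorm19 (z' - z)) := by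
        have hK := abs_nonneg K
        nlinarith [mul_nonneg (mul_nonneg hK hM) hdy,
          mul_nonneg (mul_nonneg (mul_nonneg hK hR) hK) hdz]

lemma measurable_comp_of_continuous_of_measurable {X ι β : Type*} [MeasurableSpace X]
    [TopologicalSpace ι] [TopologicalSpace.MetrizableSpace ι] [MeasurableSpace ι]
    [SecondCountableTopology ι] [OpensMeasurableSpace ι] [TopologicalSpace β]
    [TopologicalSpace.PseudoMetrizableSpace β] [MeasurableSpace β] [BorelSpace β]
    {u : X → ι → β} (hu_cont : ∀ x, Continuous (u x)) (hu_meas : ∀ i, Measurable (u · i))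
    {g : X → ι} (hg : Measurable g) :
    Measurable fun x => u x (g x) :=
  (measurable_uncurry_of_continuous_of_measurable (u := fun i x => u x i) hu_cont hu_meas).comp
    (hg.prodMk measurable_id)

lemma measurable_comp_mul_one_add {X E : Type*} [MeasurableSpace X] [NormedAddCommGroup E]
    [MeasurableSpace E] [BorelSpace E] {m n : ℕ} {v : X → Matrix (Fin m) (Fin n) ℝ → E} {K : ℝ}
    (hv_meas : ∀ z, Measurable (v · z))
    (hv_lip : ∀ x z z', ‖v x z' - v x z‖ ≤ K * frobeniusNorm19 (z' - z))
    (Z : Matrix (Fin m) (Fin n) ℝ) {G : X → Matrix (Fin n) (Fin n) ℝ}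
    (hG : ∀ i j, Measurable fun x => G x i j) :
    Measurable fun x => v x (Z * (1 + G x)) := by
  -- Mathlib puts no measurable structure on `Matrix`, so we pass through `Matrix.of`.
  have hentries : Measurable fun x => (Matrix.of.symm (Z * (1 + G x)) : Fin m → Fin n → ℝ) := by
    refine measurable_pi_lambda _ fun i => measurable_pi_lambda _ fun j => ?_
    simp only [Matrix.of_symm_apply, Matrix.mul_apply, Matrix.add_apply]
    exact Finset.measurable_sum _ fun k _ => ((hG k j).const_add _).const_mul _
  exact measurable_comp_of_continuous_of_measurable (u := fun x e => v x (Matrix.of e))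
    (fun x => (continuous_of_norm_sub_le_frobeniusNorm19 (hv_lip x)).comp
      (continuous_matrixOf.2 continuous_id))
    (fun e => hv_meas _) hentries

lemma integral_abs_le_sqrt_integral_sq {X : Type*} [MeasurableSpace X] {μ : Measure X}
    [IsProbabilityMeasure μ] {g : X → ℝ} (hg : MemLp g 2 μ) :
    ∫ x, |g x| ∂μ ≤ √(∫ x, g x ^ 2 ∂μ) := by
  refine Real.le_sqrt_of_sq_le ?_
  have hvar := variance_eq_sub hg.abs ▸ variance_nonneg (fun x => |g x|) μ
  simpa only [Pi.pow_apply, Pi.abs_apply, sq_abs, sub_nonneg] using hvar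

lemma norm_integral_smul_sub_integral_smul_le {X E : Type*} [MeasurableSpace X] {μ : Measure X}
    [IsProbabilityMeasure μ] [NormedAddCommGroup E] [NormedSpace ℝ E]
    {p p' : X → ℝ} {f f' : X → E} {C Λ δ : ℝ}
    (hp : AEStronglyMeasurable p μ) (hp' : AEStronglyMeasurable p' μ)
    (hf : AEStronglyMeasurable f μ) (hf' : AEStronglyMeasurable f' μ)
    (hp_le : ∀ x, |p x| ≤ C) (hp'_le : ∀ x, |p' x| ≤ C)
    (hf_le : ∀ x, ‖f x‖ ≤ Λ) (hf'_le : ∀ x, ‖f' x‖ ≤ Λ) (hff' : ∀ x, ‖f' x - f x‖ ≤ δ) :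
    ‖∫ x, p' x • f' x ∂μ - ∫ x, p x • f x ∂μ‖ ≤ Λ * ∫ x, |p' x - p x| ∂μ + C * δ := by
  have hint : ∀ {q : X → ℝ} {g : X → E}, AEStronglyMeasurable q μ → AEStronglyMeasurable g μ →
      (∀ x, |q x| ≤ C) → (∀ x, ‖g x‖ ≤ Λ) → Integrable (fun x => q x • g x) μ :=
    fun hq hg hq_le hg_le => Integrable.of_bound (hq.smul hg) (C * Λ) (ae_of_all _ fun x => by
      rw [norm_smul, Real.norm_eq_abs]
      exact mul_le_mul (hq_le x) (hg_le x) (norm_nonneg _) ((abs_nonneg _).trans (hq_le x)))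
  have hpp' : Integrable (fun x => |p' x - p x|) μ :=
    Integrable.of_bound (hp'.sub hp).norm (2 * C) (ae_of_all _ fun x => by
      rw [Real.norm_eq_abs, abs_abs]
      exact (abs_sub _ _).trans (by linarith [hp_le x, hp'_le x]))
  have hpointwise : ∀ x, ‖p' x • f' x - p x • f x‖ ≤ |p' x - p x| * Λ + C * δ := fun x => by
    have hsplit : p' x • f' x - p x • f x = (p' x - p x) • f' x + p x • (f' x - f x) := by
      simp only [sub_smul, smul_sub]; abel
    rw [hsplit]
    refine (norm_add_le _ _).trans (add_le_add ?_ ?_) <;> rw [norm_smul, Real.norm_eq_abs]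
    · exact mul_le_mul_of_nonneg_left (hf'_le x) (abs_nonneg _)
    · exact mul_le_mul (hp_le x) (hff' x) (norm_nonneg _) ((abs_nonneg _).trans (hp_le x))
  calc ‖∫ x, p' x • f' x ∂μ - ∫ x, p x • f x ∂μ‖
      = ‖∫ x, (p' x • f' x - p x • f x) ∂μ‖ := by
        rw [integral_sub (hint hp' hf' hp'_le hf'_le) (hint hp hf hp_le hf_le)]
    _ ≤ ∫ x, ‖p' x • f' x - p x • f x‖ ∂μ := norm_integral_le_integral_norm _
    _ ≤ ∫ x, (|p' x - p x| * Λ + C * δ) ∂μ :=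
        integral_mono_of_nonneg (ae_of_all _ fun _ => norm_nonneg _)
          ((hpp'.mul_const Λ).add (integrable_const _)) (ae_of_all _ hpointwise)
    _ = Λ * ∫ x, |p' x - p x| ∂μ + C * δ := by
        rw [integral_add (hpp'.mul_const Λ) (integrable_const _), integral_mul_const,
          integral_const, probReal_univ, one_smul, mul_comm]

theorem stmt19_general (P Q : ℕ) (Λ K M C R : ℝ) (hC : 0 < C) :
    ∃ Lip : ℝ,
      ∀ (u : (Fin P → AddCircle (1:ℝ)) → EuclideanSpace ℝ (Fin Q) →
          Matrix (Fin Q) (Fin P) ℝ → EuclideanSpace ℝ (Fin P))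
        (G : (Fin P → AddCircle (1:ℝ)) → EuclideanSpace ℝ (Fin Q) →
          Matrix (Fin P) (Fin P) ℝ)
        (p : (Fin P → AddCircle (1:ℝ)) → EuclideanSpace ℝ (Fin Q) → ℝ),
        (∀ y z, Measurable fun x => u x y z) →
        (∀ x y z, ‖u x y z‖ ≤ Λ) →
        (∀ x y y' z z', ‖u x y' z' - u x y z‖ ≤ K * (‖y' - y‖ + frobeniusNorm19 (z' - z))) →
        (∀ y i j, Measurable fun x => G x y i j) →
        (∀ x y, frobeniusNorm19 (G x y) ≤ M) →
        (∀ x y y', frobeniusNorm19 (G x y' - G x y) ≤ K * ‖y' - y‖) →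
        (∀ y, Measurable fun x => p x y) →
        (∀ x y, 1 / C ≤ p x y ∧ p x y ≤ C) →
        (∀ y, (∫ x, p x y) = 1) →
        (∀ y y', Real.sqrt (∫ x, (p x y' - p x y) ^ 2) ≤ K * ‖y' - y‖) →
        ∀ y y' z z', ‖y‖ ≤ R → ‖y'‖ ≤ R →
          frobeniusNorm19 z ≤ R → frobeniusNorm19 z' ≤ R →
          ‖(∫ x, p x y' • u x y' (z' * (1 + G x y'))) - ∫ x, p x y • u x y (z * (1 + G x y))‖
            ≤ Lip * (‖y' - y‖ + frobeniusNorm19 (z' - z)) := by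
  refine ⟨Λ * |K| + C * (|K| * (1 + M + R * |K|)), ?_⟩
  intro u G p hu_meas hu_bdd hu_lip hG_meas hG_bdd hG_lip hp_meas hp_bnd _ hp_lip
    y y' z z' _ _ hz _
  have hΛ : 0 ≤ Λ := (norm_nonneg _).trans (hu_bdd 0 y z)
  have hp_abs : ∀ x Y, |p x Y| ≤ C := fun x Y =>
    abs_le.2 ⟨by linarith [(hp_bnd x Y).1, one_div_pos.2 hC], (hp_bnd x Y).2⟩
  have hf_meas : ∀ Y (Z : Matrix (Fin Q) (Fin P) ℝ),
      Measurable fun x => u x Y (Z * (1 + G x Y)) := fun Y Z =>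
    measurable_comp_mul_one_add (hu_meas Y) (fun x z z' => by
      simpa only [sub_self, norm_zero, zero_add] using hu_lip x Y Y z z') Z (hG_meas Y)
  have hp_memLp : MemLp (fun x => p x y' - p x y) 2 :=
    MemLp.of_bound ((hp_meas y').sub (hp_meas y)).aestronglyMeasurable (2 * C)
      (ae_of_all _ fun x => (abs_sub _ _).trans (by linarith [hp_abs x y, hp_abs x y']))
  have hL1 : ∫ x, |p x y' - p x y| ≤ |K| * (‖y' - y‖ + frobeniusNorm19 (z' - z)) :=
    calc ∫ x, |p x y' - p x y|
        ≤ K * ‖y' - y‖ := (integral_abs_le_sqrt_integral_sq hp_memLp).trans (hp_lip y y')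
      _ ≤ |K| * (‖y' - y‖ + frobeniusNorm19 (z' - z)) :=
        mul_le_mul (le_abs_self K) (le_add_of_nonneg_right (frobeniusNorm19_nonneg _))
          (norm_nonneg _) (abs_nonneg K)
  have hbound := norm_integral_smul_sub_integral_smul_le (μ := volume)
    (hp_meas y).aestronglyMeasurable (hp_meas y').aestronglyMeasurable
    (hf_meas y z).aestronglyMeasurable (hf_meas y' z').aestronglyMeasurable
    (fun x => hp_abs x y) (fun x => hp_abs x y') (fun x => hu_bdd _ _ _) (fun x => hu_bdd _ _ _)
    (fun x => norm_sub_le_of_lipschitz_comp_mul_one_add (hu_lip x) (hG_bdd x) (hG_lip x) hz)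
  exact hbound.trans (by linarith [mul_le_mul_of_nonneg_left hL1 hΛ])

theorem stmt19 (P Q : ℕ) (Λ K M C R : ℝ) (hC : 0 < C) (hR : 0 < R) :
    ∃ Lip : ℝ,
      ∀ (u : (Fin P → AddCircle (1:ℝ)) → EuclideanSpace ℝ (Fin Q) →
          Matrix (Fin Q) (Fin P) ℝ → EuclideanSpace ℝ (Fin P))
        (G : (Fin P → AddCircle (1:ℝ)) → EuclideanSpace ℝ (Fin Q) →
          Matrix (Fin P) (Fin P) ℝ)
        (p : (Fin P → AddCircle (1:ℝ)) → EuclideanSpace ℝ (Fin Q) → ℝ),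
        (∀ y z, Measurable fun x => u x y z) →
        (∀ x y z, ‖u x y z‖ ≤ Λ) →
        (∀ x y y' z z', ‖u x y' z' - u x y z‖ ≤ K * (‖y' - y‖ + frobeniusNorm19 (z' - z))) →
        (∀ y i j, Measurable fun x => G x y i j) →
        (∀ x y, frobeniusNorm19 (G x y) ≤ M) →
        (∀ x y y', frobeniusNorm19 (G x y' - G x y) ≤ K * ‖y' - y‖) →
        (∀ y, Measurable fun x => p x y) →
        (∀ x y, 1 / C ≤ p x y ∧ p x y ≤ C) →
        (∀ y, (∫ x, p x y) = 1) →
        (∀ y y', Real.sqrt (∫ x, (p x y' - p x y) ^ 2) ≤ K * ‖y' - y‖) →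
        ∀ y y' z z', ‖y‖ ≤ R → ‖y'‖ ≤ R →
          frobeniusNorm19 z ≤ R → frobeniusNorm19 z' ≤ R →
          ‖(∫ x, p x y' • u x y' (z' * (1 + G x y'))) - ∫ x, p x y • u x y (z * (1 + G x y))‖
            ≤ Lip * (‖y' - y‖ + frobeniusNorm19 (z' - z)) :=
  stmt19_general P Q Λ K M C R hC
end
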